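/- Semantic data processing inequality (lower part): if U → V → W is a Markov chain of finite random variables, then for any partitions of the alphabets of U and W, I_s(Ũ;W̃) ≤ I(U;W) ≤ I(U;V), where I_s(Ũ;W̃) = H_s(Ũ)+H_s(W̃)−H(U,W). -/

import Mathlib

open Finset

/-- Probability of the block of index `i` under the partition induced by `blk`. -/
noncomputable def blockProb {U B : Type*} [Fintype U] [DecidableEq B]
    (p : U → ℝ) (blk : U → B) (i : B) : ℝ :=
  ∑ u : U, if blk u = i then p u else 0

/-- Semantic entropy: entropy of the block probabilities. -/
noncomputable def semEntropy {U B : Type*} [Fintype U] [Fintype B] [DecidableEq B]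
    (p : U → ℝ) (blk : U → B) : ℝ :=
  -∑ i : B, blockProb p blk i * Real.logb 2 (blockProb p blk i)

/-- Shannon entropy of a pmf on a finite alphabet (base 2). -/
noncomputable def shannonEntropy {U : Type*} [Fintype U] (p : U → ℝ) : ℝ :=
  -∑ u : U, p u * Real.logb 2 (p u)

/-- Shannon mutual information `I(U;V) = H(U) + H(V) − H(U,V)` of a joint pmf. -/
noncomputable def mutualInfo {U V : Type*} [Fintype U] [Fintype V] (p : U × V → ℝ) : ℝ :=
  shannonEntropy (fun u => ∑ v : V, p (u, v)) +
    shannonEntropy (fun v => ∑ u : U, p (u, v)) - shannonEntropy p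

/-!
Merging outcomes into blocks can only raise the probability attached to each outcome, so it
lowers entropy: `H_s(Ũ) ≤ H(U)` and `H_s(W̃) ≤ H(W)`, which gives the first inequality.
For the second, `I(U;V) − I(U;W)` is the conditional mutual information `I(U;V|W)`: using the
Markov property `p(u,v,w) p(v) = p(u,v) p(v,w)`, it is the Kullback–Leibler divergence of `p`
from `q(u,v,w) = p(u,w) p(v,w) / p(w)`, and `q` has total mass at most that of `p`, so Gibbs'
inequality makes it nonnegative.
-/

open Real

theorem sub_le_mul_log_div {x y : ℝ} (hx : 0 ≤ x) (hy : 0 ≤ y) (hxy : y = 0 → x = 0) :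
    x - y ≤ x * log (x / y) := by
  rcases hy.eq_or_lt with rfl | hy
  · simp [hxy rfl]
  calc x - y = y * (x / y - 1) := by field_simp
    _ ≤ y * (x / y * log (x / y)) :=
      mul_le_mul_of_nonneg_left (self_sub_one_le_mul_log (div_nonneg hx hy.le)) hy.le
    _ = x * log (x / y) := by field_simp

theorem sum_mul_log_div_nonneg {α : Type*} [Fintype α] {p q : α → ℝ} (hp : ∀ x, 0 ≤ p x)
    (hq : ∀ x, 0 ≤ q x) (hpq : ∀ x, q x = 0 → p x = 0) (hmass : ∑ x, q x ≤ ∑ x, p x) :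
    0 ≤ ∑ x, p x * log (p x / q x) :=
  calc 0 ≤ ∑ x, (p x - q x) := by rw [sum_sub_distrib]; linarith
    _ ≤ ∑ x, p x * log (p x / q x) :=
      sum_le_sum fun x _ => sub_le_mul_log_div (hp x) (hq x) (hpq x)

theorem sum_mul_logb_div_nonneg {α : Type*} [Fintype α] {b : ℝ} (hb : 1 < b) {p q : α → ℝ}
    (hp : ∀ x, 0 ≤ p x) (hq : ∀ x, 0 ≤ q x) (hpq : ∀ x, q x = 0 → p x = 0)
    (hmass : ∑ x, q x ≤ ∑ x, p x) :
    0 ≤ ∑ x, p x * logb b (p x / q x) := by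
  simp_rw [logb, ← mul_div_assoc, ← sum_div]
  exact div_nonneg (sum_mul_log_div_nonneg hp hq hpq hmass) (log_nonneg hb.le)

theorem single_le_sum_sum {ι κ : Type*} [Fintype ι] [Fintype κ] {f : ι → κ → ℝ}
    (hf : ∀ i j, 0 ≤ f i j) (i : ι) (j : κ) : f i j ≤ ∑ i, ∑ j, f i j :=
  (single_le_sum (fun j _ => hf i j) (mem_univ j)).trans
    (single_le_sum (fun i _ => sum_nonneg fun j _ => hf i j) (mem_univ i))

section Partition

variable {U B : Type*} [Fintype U] [Fintype B] [DecidableEq B] (p : U → ℝ) (blk : U → B)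

theorem sum_blockProb_mul (φ : B → ℝ) :
    ∑ i, blockProb p blk i * φ i = ∑ u, p u * φ (blk u) := by
  simp only [blockProb, sum_mul, ite_mul, zero_mul]
  rw [sum_comm]
  simp

omit [Fintype B] in
theorem le_blockProb (hp : ∀ u, 0 ≤ p u) (u : U) : p u ≤ blockProb p blk (blk u) := by
  rw [blockProb, ← sum_filter]
  exact single_le_sum (fun v _ => hp v) (by simp)

theorem semEntropy_le_shannonEntropy (hp : ∀ u, 0 ≤ p u) :
    semEntropy p blk ≤ shannonEntropy p := by
  rw [semEntropy, shannonEntropy, neg_le_neg_iff,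
    sum_blockProb_mul p blk fun i => logb 2 (blockProb p blk i)]
  refine sum_le_sum fun u _ => ?_
  rcases (hp u).eq_or_lt with h | h
  · simp [← h]
  · exact mul_le_mul_of_nonneg_left
      (logb_le_logb_of_le one_lt_two h (le_blockProb p blk hp u)) (hp u)

end Partition

section MarkovChain

variable {U V W : Type*} [Fintype U] [Fintype V] [Fintype W] (p : U × V × W → ℝ)

theorem mutualInfo_sub_mutualInfo_eq :
    mutualInfo (fun x : U × V => ∑ w, p (x.1, x.2, w)) -
        mutualInfo (fun x : U × W => ∑ v, p (x.1, v, x.2)) =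
      ∑ u, ∑ v, ∑ w, p (u, v, w) *
        (logb 2 (∑ w', p (u, v, w')) + logb 2 (∑ u', ∑ v', p (u', v', w)) -
          logb 2 (∑ u', ∑ w', p (u', v, w')) - logb 2 (∑ v', p (u, v', w))) := by
  have hU (u : U) : ∑ w, ∑ v, p (u, v, w) = ∑ v, ∑ w, p (u, v, w) := sum_comm
  have hV (f : V → ℝ) : ∑ v, ∑ u, ∑ w, p (u, v, w) * f v = ∑ u, ∑ v, ∑ w, p (u, v, w) * f v :=
    sum_comm
  have hW (f : W → ℝ) : ∑ w, ∑ u, ∑ v, p (u, v, w) * f w = ∑ u, ∑ v, ∑ w, p (u, v, w) * f w := by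
    rw [sum_comm]
    exact sum_congr rfl fun _ _ => sum_comm
  have hUW (f : U → W → ℝ) :
      ∑ u, ∑ w, ∑ v, p (u, v, w) * f u w = ∑ u, ∑ v, ∑ w, p (u, v, w) * f u w :=
    sum_congr rfl fun _ _ => sum_comm
  simp only [mutualInfo, shannonEntropy, Fintype.sum_prod_type, hU, sum_mul, mul_add, mul_sub,
    sum_add_distrib, sum_sub_distrib]
  rw [hV, hW, hUW]
  ring

theorem marginals_pos_of_pos (hp : ∀ x, 0 ≤ p x) {u : U} {v : V} {w : W} (h : 0 < p (u, v, w)) :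
    0 < ∑ w', p (u, v, w') ∧ 0 < ∑ u', ∑ v', p (u', v', w) ∧ 0 < ∑ u', ∑ w', p (u', v, w') ∧
      0 < ∑ v', p (u, v', w) ∧ 0 < ∑ u', p (u', v, w) :=
  ⟨h.trans_le (single_le_sum (fun w' _ => hp (u, v, w')) (mem_univ w)),
    h.trans_le (single_le_sum_sum (fun u' v' => hp (u', v', w)) u v),
    h.trans_le (single_le_sum_sum (fun u' w' => hp (u', v, w')) u w),
    h.trans_le (single_le_sum (fun v' _ => hp (u, v', w)) (mem_univ v)),
    h.trans_le (single_le_sum (fun u' _ => hp (u', v, w)) (mem_univ u))⟩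

/-- The law with the `(U,W)` and `(V,W)` marginals of `p` under which `U` and `V` are
conditionally independent given `W`. -/
noncomputable def condIndepLaw (a : U × V × W) : ℝ :=
  (∑ v, p (a.1, v, a.2.2)) * (∑ u, p (u, a.2.1, a.2.2)) / ∑ u, ∑ v, p (u, v, a.2.2)

omit [Fintype W] in
theorem condIndepLaw_nonneg (hp : ∀ x, 0 ≤ p x) (a : U × V × W) : 0 ≤ condIndepLaw p a :=
  div_nonneg (mul_nonneg (sum_nonneg fun _ _ => hp _) (sum_nonneg fun _ _ => hp _))
    (sum_nonneg fun _ _ => sum_nonneg fun _ _ => hp _)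

theorem eq_zero_of_condIndepLaw_eq_zero (hp : ∀ x, 0 ≤ p x) (a : U × V × W)
    (ha : condIndepLaw p a = 0) : p a = 0 := by
  by_contra hne
  obtain ⟨-, hW, -, hUW, hVW⟩ := marginals_pos_of_pos p hp ((hp a).lt_of_ne' hne)
  exact (div_pos (mul_pos hUW hVW) hW).ne' ha

theorem sum_condIndepLaw_le (hp : ∀ x, 0 ≤ p x) : ∑ a, condIndepLaw p a ≤ ∑ a, p a := by
  have hW (u : U) (w : W) : ∑ v, (∑ v', p (u, v', w)) * (∑ u', p (u', v, w)) /
      ∑ u', ∑ v', p (u', v', w) ≤ ∑ v, p (u, v, w) := by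
    rw [← sum_div, ← mul_sum, sum_comm, mul_div_assoc]
    exact mul_le_of_le_one_right (sum_nonneg fun v _ => hp _) (div_self_le_one _)
  simp only [condIndepLaw, Fintype.sum_prod_type]
  calc _ = ∑ u, ∑ w, ∑ v, (∑ v', p (u, v', w)) * (∑ u', p (u', v, w)) /
        ∑ u', ∑ v', p (u', v', w) := sum_congr rfl fun _ _ => sum_comm
    _ ≤ ∑ u, ∑ w, ∑ v, p (u, v, w) := sum_le_sum fun u _ => sum_le_sum fun w _ => hW u w
    _ = _ := sum_congr rfl fun _ _ => sum_comm

theorem logb_markov_eq {b x pUV pW pV pUW pVW : ℝ} (hUV : 0 < pUV) (hW : 0 < pW)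
    (hV : 0 < pV) (hUW : 0 < pUW) (hVW : 0 < pVW) (h : x * pV = pUV * pVW) :
    logb b pUV + logb b pW - logb b pV - logb b pUW = logb b (x / (pUW * pVW / pW)) := by
  have hratio : x / (pUW * pVW / pW) = pUV * pW / (pV * pUW) := by
    field_simp
    linear_combination h
  rw [hratio, logb_div (by positivity) (by positivity), logb_mul hUV.ne' hW.ne',
    logb_mul hV.ne' hUW.ne']
  ring

variable (hp : ∀ x, 0 ≤ p x)
  (hmarkov : ∀ (u : U) (v : V) (w : W),
    p (u, v, w) * (∑ u' : U, ∑ w' : W, p (u', v, w')) =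
      (∑ w' : W, p (u, v, w')) * (∑ u' : U, p (u', v, w)))
include hp hmarkov

theorem mutualInfo_sub_mutualInfo_eq_sum_logb_div_condIndepLaw :
    mutualInfo (fun x : U × V => ∑ w, p (x.1, x.2, w)) -
        mutualInfo (fun x : U × W => ∑ v, p (x.1, v, x.2)) =
      ∑ a, p a * logb 2 (p a / condIndepLaw p a) := by
  simp only [mutualInfo_sub_mutualInfo_eq, Fintype.sum_prod_type]
  refine sum_congr rfl fun u _ => sum_congr rfl fun v _ => sum_congr rfl fun w _ => ?_
  rcases (hp (u, v, w)).eq_or_lt with h | h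
  · simp [← h]
  obtain ⟨hUV, hW, hV, hUW, hVW⟩ := marginals_pos_of_pos p hp h
  rw [logb_markov_eq hUV hW hV hUW hVW (hmarkov u v w), condIndepLaw]

theorem mutualInfo_le_mutualInfo_of_markov :
    mutualInfo (fun x : U × W => ∑ v, p (x.1, v, x.2)) ≤
      mutualInfo (fun x : U × V => ∑ w, p (x.1, x.2, w)) := by
  rw [← sub_nonneg, mutualInfo_sub_mutualInfo_eq_sum_logb_div_condIndepLaw p hp hmarkov]
  exact sum_mul_logb_div_nonneg one_lt_two hp (condIndepLaw_nonneg p hp)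
    (eq_zero_of_condIndepLaw_eq_zero p hp) (sum_condIndepLaw_le p hp)

end MarkovChain

theorem sem_data_processing_general
    {U V W I K : Type*} [Fintype U] [Fintype V] [Fintype W] [Fintype I] [Fintype K]
    [DecidableEq I] [DecidableEq K]
    (p : U × V × W → ℝ) (blkU : U → I) (blkW : W → K)
    (hp : ∀ x, 0 ≤ p x)
    (hmarkov : ∀ (u : U) (v : V) (w : W),
      p (u, v, w) * (∑ u' : U, ∑ w' : W, p (u', v, w')) =
        (∑ w' : W, p (u, v, w')) * (∑ u' : U, p (u', v, w))) :
    semEntropy (fun u => ∑ v : V, ∑ w : W, p (u, v, w)) blkU +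
        semEntropy (fun w => ∑ u : U, ∑ v : V, p (u, v, w)) blkW -
        shannonEntropy (fun x : U × W => ∑ v : V, p (x.1, v, x.2)) ≤
      mutualInfo (fun x : U × W => ∑ v : V, p (x.1, v, x.2)) ∧
    mutualInfo (fun x : U × W => ∑ v : V, p (x.1, v, x.2)) ≤
      mutualInfo (fun x : U × V => ∑ w : W, p (x.1, x.2, w)) := by
  refine ⟨?_, mutualInfo_le_mutualInfo_of_markov p hp hmarkov⟩
  have hU := semEntropy_le_shannonEntropy (fun u => ∑ v, ∑ w, p (u, v, w)) blkU fun u =>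
    sum_nonneg fun v _ => sum_nonneg fun w _ => hp (u, v, w)
  have hW := semEntropy_le_shannonEntropy (fun w => ∑ u, ∑ v, p (u, v, w)) blkW fun w =>
    sum_nonneg fun u _ => sum_nonneg fun v _ => hp (u, v, w)
  have hU' : shannonEntropy (fun u => ∑ w, ∑ v, p (u, v, w)) =
      shannonEntropy (fun u => ∑ v, ∑ w, p (u, v, w)) :=
    congrArg _ (funext fun _ => sum_comm)
  simp only [mutualInfo, hU']
  linarith

/-- Semantic data processing inequality (lower part): for a Markov chain
`U → V → W`, `I_s(Ũ;W̃) ≤ I(U;W) ≤ I(U;V)`, where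
`I_s(Ũ;W̃) = H_s(Ũ) + H_s(W̃) − H(U,W)`. -/
theorem sem_data_processing
    {U V W I K : Type*} [Fintype U] [Fintype V] [Fintype W] [Fintype I] [Fintype K]
    [DecidableEq I] [DecidableEq K]
    (p : U × V × W → ℝ) (blkU : U → I) (blkW : W → K)
    (hp : ∀ x, 0 ≤ p x) (hsum : ∑ x, p x = 1)
    (hmarkov : ∀ (u : U) (v : V) (w : W),
      p (u, v, w) * (∑ u' : U, ∑ w' : W, p (u', v, w')) =
        (∑ w' : W, p (u, v, w')) * (∑ u' : U, p (u', v, w))) :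
    semEntropy (fun u => ∑ v : V, ∑ w : W, p (u, v, w)) blkU +
        semEntropy (fun w => ∑ u : U, ∑ v : V, p (u, v, w)) blkW -
        shannonEntropy (fun x : U × W => ∑ v : V, p (x.1, v, x.2)) ≤
      mutualInfo (fun x : U × W => ∑ v : V, p (x.1, v, x.2)) ∧
    mutualInfo (fun x : U × W => ∑ v : V, p (x.1, v, x.2)) ≤
      mutualInfo (fun x : U × V => ∑ w : W, p (x.1, x.2, w)) :=
  sem_data_processing_general p blkU blkW hp hmarkov
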